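/- Monotone decrease of the constraint residual in Bregman iteration: if u^{k+1} minimizes D_J^{p^k}(u, u^k) + ½‖Au − f‖₂² with J convex and p^k ∈ ∂J(u^k), p^{k+1} = p^k − A^T(Au^{k+1} − f) ∈ ∂J(u^{k+1}), then ‖Au^{k+1} − f‖₂ ≤ ‖Au^k − f‖₂. -/
import Mathlib


open scoped RealInnerProductSpace

/-- Monotone decrease of the constraint residual in Bregman iteration: if `u^{k+1}`
minimizes `u ↦ D_J^{pᵏ}(u, uᵏ) + ½‖Au − f‖₂²` with `J` convex, `pᵏ ∈ ∂J(uᵏ)` and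
`p^{k+1} = pᵏ − Aᵀ(Au^{k+1} − f) ∈ ∂J(u^{k+1})`, then `‖Au^{k+1} − f‖₂ ≤ ‖Auᵏ − f‖₂`. -/
theorem bregman_residual_decrease (n m : ℕ)
    (J : EuclideanSpace ℝ (Fin n) → ℝ) (hJ : ConvexOn ℝ Set.univ J)
    (A : EuclideanSpace ℝ (Fin n) →ₗ[ℝ] EuclideanSpace ℝ (Fin m))
    (f : EuclideanSpace ℝ (Fin m))
    (uk uk1 pk pk1 : EuclideanSpace ℝ (Fin n))
    (hpk : ∀ x, J uk + ⟪pk, x - uk⟫ ≤ J x)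
    (hmin : ∀ u : EuclideanSpace ℝ (Fin n),
        (J uk1 - J uk - ⟪pk, uk1 - uk⟫) + (1/2) * ‖A uk1 - f‖^2 ≤
        (J u - J uk - ⟪pk, u - uk⟫) + (1/2) * ‖A u - f‖^2)
    (hpk1def : pk1 = pk - (LinearMap.adjoint A) (A uk1 - f))
    (hpk1 : ∀ x, J uk1 + ⟪pk1, x - uk1⟫ ≤ J x) :
    ‖A uk1 - f‖ ≤ ‖A uk - f‖ := by
  have h1 := hmin uk
  have h2 := hpk uk1
  have hsq : ‖A uk1 - f‖^2 ≤ ‖A uk - f‖^2 := by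
    simp only [sub_self, inner_zero_right] at h1
    nlinarith [h1, h2]
  nlinarith [hsq, norm_nonneg (A uk1 - f), norm_nonneg (A uk - f)]
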